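/- For the c-random walk on Ω_M (0 < c < M, r_j = (1 − c/M)(c/M)^{j−1}), lim_{L→∞} Var N_n(L) = 0 if c < 1, = 2n if c = 1, and = ∞ if c > 1. -/

import Mathlib

open MeasureTheory Filter
open scoped ENNReal NNReal BigOperators Topology

noncomputable section

/-- The hierarchical group of order `M`: finitely supported sequences with entries in `ZMod M`,
with componentwise addition mod `M`. -/
abbrev Omega (M : ℕ) := ℕ →₀ ZMod M

/-- The hierarchical norm: `|x| = max {i : x_i ≠ 0}` (coordinates indexed from 1), `|0| = 0`. -/
def hnorm {M : ℕ} (x : Omega M) : ℕ := x.support.sup (· + 1)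

instance {M : ℕ} : MeasurableSpace (Omega M) := ⊤

/-- The `n`-step distribution of the random walk with step distribution `ρ`, started at `0`. -/
def walk {M : ℕ} (ρ : PMF (Omega M)) : ℕ → PMF (Omega M)
  | 0 => PMF.pure 0
  | n + 1 => (walk ρ n).bind fun x => ρ.map (x + ·)

/-!
Since `B_L = {x | hnorm x ≤ L}` is a subgroup of `Ω_M` with `M ^ L` elements, summing
`a_u (1 - a_u)` over the starting points `u` (with `a_u` the probability that the walk from `u`
ends in `B_L`) gives `Var N_n(L) = M ^ L · P(Y - X ∉ B_L)` for independent copies `X, Y` of the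
`n`-step walk. A single step leaves `B_L` with probability `e = (c / M) ^ L`. As `B_L` is a
subgroup, `x + y ∉ B_L` forces `x ∉ B_L` or `y ∉ B_L`, and exactly one of them outside forces
`x + y ∉ B_L`; by induction `P(Y - X ∉ B_L)` lies between `2ne - (2ne) ^ 2` and `2ne`. Hence
`Var N_n(L) = 2n c ^ L (1 + O((c / M) ^ L))`, which tends to `0`, `2n` or `∞` according as
`c < 1`, `c = 1` or `c > 1`.
-/

namespace AddSubgroup

variable {G : Type*} [AddGroup G] (H : AddSubgroup G)

theorem preimage_add_left_compl_of_mem {x : G} (hx : x ∈ H) :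
    (x + ·) ⁻¹' (H : Set G)ᶜ = (H : Set G)ᶜ := by
  ext y; simp [H.add_mem_cancel_left hx]

theorem subset_preimage_add_left_compl_of_notMem {x : G} (hx : x ∉ H) :
    (H : Set G) ⊆ (x + ·) ⁻¹' (H : Set G)ᶜ := fun _ hy hxy =>
  hx ((H.add_mem_cancel_right hy).1 hxy)

theorem tsum_indicator_add_mul_preimage_compl (f : Set G → ℝ≥0∞) (x : G) :
    ∑' u, (H : Set G).indicator (fun _ => 1) (u + x) * f ((u + ·) ⁻¹' (H : Set G)ᶜ)
      = (H : Set G).encard * f ((-x + ·) ⁻¹' (H : Set G)ᶜ) := by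
  rw [← (Equiv.addRight (-x)).tsum_eq, ← ENNReal.tsum_set_const,
    tsum_subtype (H : Set G) fun _ => f ((-x + ·) ⁻¹' (H : Set G)ᶜ)]
  refine tsum_congr fun v => ?_
  by_cases hv : v ∈ H
  · have : ((v + -x) + ·) ⁻¹' (H : Set G)ᶜ = (-x + ·) ⁻¹' (H : Set G)ᶜ := by
      ext y; simp [add_assoc, H.add_mem_cancel_left hv]
    simp [hv, this]
  · simp [hv]

end AddSubgroup

namespace PMF

section Discrete

variable {α : Type*} [MeasurableSpace α] [DiscreteMeasurableSpace α]

theorem tsum_mul_indicator_const (p : PMF α) (s : Set α) (k : ℝ≥0∞) :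
    ∑' x, p x * s.indicator (fun _ => k) x = p.toMeasure s * k := by
  rw [toMeasure_apply _ (.of_discrete), ← ENNReal.tsum_mul_right]
  refine tsum_congr fun x => ?_
  by_cases hx : x ∈ s <;> simp [hx]

end Discrete

variable {G : Type*} [AddGroup G]

def addConv (p q : PMF G) : PMF G :=
  p.bind fun x => q.map (x + ·)

variable [MeasurableSpace G] [DiscreteMeasurableSpace G] (H : AddSubgroup G) (p q : PMF G)

theorem toMeasure_addConv_apply (s : Set G) :
    (p.addConv q).toMeasure s = ∑' x, p x * q.toMeasure ((x + ·) ⁻¹' s) := by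
  simp only [addConv, toMeasure_bind_apply _ _ _ (.of_discrete),
    toMeasure_map_apply _ _ _ (.of_discrete) (.of_discrete)]

theorem toMeasure_addConv_compl_le :
    (p.addConv q).toMeasure (H : Set G)ᶜ
      ≤ p.toMeasure (H : Set G)ᶜ + q.toMeasure (H : Set G)ᶜ := by
  have hle : ∀ x, q.toMeasure ((x + ·) ⁻¹' (H : Set G)ᶜ)
      ≤ (H : Set G)ᶜ.indicator (fun _ => 1) x + q.toMeasure (H : Set G)ᶜ := fun x => by
    by_cases hx : x ∈ H
    · simp [hx, H.preimage_add_left_compl_of_mem hx]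
    · simpa [hx] using le_add_right prob_le_one
  calc (p.addConv q).toMeasure (H : Set G)ᶜ
      ≤ ∑' x, p x * ((H : Set G)ᶜ.indicator (fun _ => 1) x + q.toMeasure (H : Set G)ᶜ) := by
        rw [toMeasure_addConv_apply]
        exact ENNReal.tsum_le_tsum fun x => mul_le_mul_right (hle x) _
    _ = _ := by
        simp only [mul_add, ENNReal.tsum_add, tsum_mul_indicator_const, ENNReal.tsum_mul_right,
          tsum_coe, mul_one, one_mul]

theorem le_toMeasure_addConv_compl :
    p.toMeasure H * q.toMeasure (H : Set G)ᶜ + p.toMeasure (H : Set G)ᶜ * q.toMeasure H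
      ≤ (p.addConv q).toMeasure (H : Set G)ᶜ := by
  have hle : ∀ x, (H : Set G).indicator (fun _ => q.toMeasure (H : Set G)ᶜ) x
      + (H : Set G)ᶜ.indicator (fun _ => q.toMeasure H) x
      ≤ q.toMeasure ((x + ·) ⁻¹' (H : Set G)ᶜ) := fun x => by
    by_cases hx : x ∈ H
    · simp [hx, H.preimage_add_left_compl_of_mem hx]
    · simpa [hx] using measure_mono (H.subset_preimage_add_left_compl_of_notMem hx)
  calc _ = ∑' x, p x * ((H : Set G).indicator (fun _ => q.toMeasure (H : Set G)ᶜ) x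
          + (H : Set G)ᶜ.indicator (fun _ => q.toMeasure H) x) := by
        simp only [mul_add, ENNReal.tsum_add, tsum_mul_indicator_const]
    _ ≤ _ := by
        rw [toMeasure_addConv_apply]
        exact ENNReal.tsum_le_tsum fun x => mul_le_mul_right (hle x) _

theorem measureReal_addConv_compl_le :
    (p.addConv q).toMeasure.real (H : Set G)ᶜ
      ≤ p.toMeasure.real (H : Set G)ᶜ + q.toMeasure.real (H : Set G)ᶜ := by
  simp only [measureReal_def]
  rw [← ENNReal.toReal_add (measure_ne_top _ _) (measure_ne_top _ _)]
  exact ENNReal.toReal_mono (by finiteness) (toMeasure_addConv_compl_le H p q)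

theorem le_measureReal_addConv_compl :
    p.toMeasure.real (H : Set G)ᶜ + q.toMeasure.real (H : Set G)ᶜ
        - 2 * p.toMeasure.real (H : Set G)ᶜ * q.toMeasure.real (H : Set G)ᶜ
      ≤ (p.addConv q).toMeasure.real (H : Set G)ᶜ := by
  have h := ENNReal.toReal_mono (measure_ne_top _ _) (le_toMeasure_addConv_compl H p q)
  rw [ENNReal.toReal_add (by finiteness) (by finiteness)] at h
  simp only [ENNReal.toReal_mul, ← measureReal_def] at h
  have hp := probReal_compl_eq_one_sub (μ := p.toMeasure) (s := (H : Set G)ᶜ) (.of_discrete)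
  have hq := probReal_compl_eq_one_sub (μ := q.toMeasure) (s := (H : Set G)ᶜ) (.of_discrete)
  rw [compl_compl] at hp hq
  rw [hp, hq] at h
  linarith

theorem toMeasure_map_neg_apply_compl :
    (p.map Neg.neg).toMeasure (H : Set G)ᶜ = p.toMeasure (H : Set G)ᶜ := by
  rw [toMeasure_map_apply _ _ _ (.of_discrete) (.of_discrete)]
  congr 1
  ext x
  simp

theorem toMeasure_map_neg_addConv_apply (s : Set G) :
    ((p.map Neg.neg).addConv q).toMeasure s = ∑' x, p x * q.toMeasure ((-x + ·) ⁻¹' s) := by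
  simp only [addConv, bind_map, toMeasure_bind_apply _ _ _ (.of_discrete), Function.comp_apply,
    toMeasure_map_apply _ _ _ (.of_discrete) (.of_discrete)]

/-- `N_n(L)` is a sum of independent indicators, one for each starting point `u`, with means
`a_u = P(u + X_n ∈ H)`; this is its variance `∑ a_u (1 - a_u)`. -/
def numberVariance (p : PMF G) (H : AddSubgroup G) : ℝ≥0∞ :=
  ∑' u, p.toMeasure ((u + ·) ⁻¹' H) * (1 - p.toMeasure ((u + ·) ⁻¹' H))

theorem numberVariance_eq :
    p.numberVariance H
      = (H : Set G).encard * ((p.map Neg.neg).addConv p).toMeasure (H : Set G)ᶜ := by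
  have hcompl : ∀ u : G,
      1 - p.toMeasure ((u + ·) ⁻¹' H) = p.toMeasure ((u + ·) ⁻¹' (H : Set G)ᶜ) :=
    fun u => (prob_compl_eq_one_sub (.of_discrete)).symm
  have hmem : ∀ u : G, p.toMeasure ((u + ·) ⁻¹' H)
      = ∑' x, p x * (H : Set G).indicator (fun _ => 1) (u + x) := fun u => by
    rw [← mul_one (p.toMeasure _), ← tsum_mul_indicator_const]; rfl
  simp only [numberVariance, hcompl]
  simp only [hmem, ← ENNReal.tsum_mul_right]
  rw [ENNReal.tsum_comm, toMeasure_map_neg_addConv_apply, ← ENNReal.tsum_mul_left]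
  refine tsum_congr fun x => ?_
  simp only [mul_assoc, ENNReal.tsum_mul_left]
  rw [H.tsum_indicator_add_mul_preimage_compl, mul_left_comm]

end PMF

section Walk

variable {M : ℕ} (H : AddSubgroup (Omega M)) (ρ : PMF (Omega M))

theorem walk_succ (m : ℕ) : walk ρ (m + 1) = (walk ρ m).addConv ρ := rfl

theorem measureReal_walk_zero_compl : (walk ρ 0).toMeasure.real (H : Set (Omega M))ᶜ = 0 := by
  simp [walk, measureReal_def, PMF.toMeasure_pure_apply _ _ (.of_discrete)]

theorem measureReal_walk_compl_le (m : ℕ) :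
    (walk ρ m).toMeasure.real (H : Set (Omega M))ᶜ
      ≤ m * ρ.toMeasure.real (H : Set (Omega M))ᶜ := by
  induction m with
  | zero => simp [measureReal_walk_zero_compl]
  | succ m ih =>
    have := PMF.measureReal_addConv_compl_le H (walk ρ m) ρ
    rw [walk_succ]
    push_cast
    linarith

theorem le_measureReal_walk_compl (m : ℕ) :
    m * ρ.toMeasure.real (H : Set (Omega M))ᶜ
        - (m * ρ.toMeasure.real (H : Set (Omega M))ᶜ) ^ 2
      ≤ (walk ρ m).toMeasure.real (H : Set (Omega M))ᶜ := by
  induction m with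
  | zero => simp [measureReal_walk_zero_compl]
  | succ m ih =>
    have hstep := PMF.le_measureReal_addConv_compl H (walk ρ m) ρ
    have hup := measureReal_walk_compl_le H ρ m
    have he : 0 ≤ ρ.toMeasure.real (H : Set (Omega M))ᶜ := measureReal_nonneg
    rw [walk_succ]
    push_cast
    nlinarith [sq_nonneg (ρ.toMeasure.real (H : Set (Omega M))ᶜ)]

end Walk

section Difference

variable {M : ℕ} (H : AddSubgroup (Omega M)) (ρ : PMF (Omega M)) (n : ℕ)

theorem measureReal_walk_sub_walk_compl_le :
    (((walk ρ n).map Neg.neg).addConv (walk ρ n)).toMeasure.real (H : Set (Omega M))ᶜ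
      ≤ (2 * n : ℝ) * ρ.toMeasure.real (H : Set (Omega M))ᶜ := by
  have hconv := PMF.measureReal_addConv_compl_le H ((walk ρ n).map Neg.neg) (walk ρ n)
  have hwalk := measureReal_walk_compl_le H ρ n
  simp only [measureReal_def, PMF.toMeasure_map_neg_apply_compl] at hconv hwalk ⊢
  linarith

theorem le_measureReal_walk_sub_walk_compl :
    (2 * n : ℝ) * ρ.toMeasure.real (H : Set (Omega M))ᶜ
        - ((2 * n : ℝ) * ρ.toMeasure.real (H : Set (Omega M))ᶜ) ^ 2
      ≤ (((walk ρ n).map Neg.neg).addConv (walk ρ n)).toMeasure.real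
          (H : Set (Omega M))ᶜ := by
  have hconv := PMF.le_measureReal_addConv_compl H ((walk ρ n).map Neg.neg) (walk ρ n)
  have hlo := le_measureReal_walk_compl H ρ n
  have hup := measureReal_walk_compl_le H ρ n
  have hq : 0 ≤ (walk ρ n).toMeasure.real (H : Set (Omega M))ᶜ := measureReal_nonneg
  simp only [measureReal_def, PMF.toMeasure_map_neg_apply_compl] at hconv hlo hup hq ⊢
  nlinarith

end Difference

namespace Omega

variable {M : ℕ}

theorem hnorm_le_iff {x : Omega M} {L : ℕ} :
    hnorm x ≤ L ↔ (x.support : Set ℕ) ⊆ Set.Iio L := by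
  simp only [hnorm, Finset.sup_le_iff, Set.subset_def, Finset.mem_coe, Set.mem_Iio,
    Nat.lt_iff_add_one_le]

def ball (M L : ℕ) : AddSubgroup (Omega M) :=
  (Finsupp.supported (ZMod M) (ZMod M) (Set.Iio L)).toAddSubgroup

theorem coe_ball (L : ℕ) : (ball M L : Set (Omega M)) = {x | hnorm x ≤ L} := by
  ext x
  simp only [ball, Submodule.coe_toAddSubgroup, SetLike.mem_coe, Finsupp.mem_supported,
    Set.mem_ofPred_eq, hnorm_le_iff]

theorem natCard_ball [NeZero M] (L : ℕ) : Nat.card (ball M L) = M ^ L := by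
  have e : ball M L ≃ (Set.Iio L →₀ ZMod M) :=
    (Finsupp.supportedEquivFinsupp (R := ZMod M) (Set.Iio L)).toEquiv
  rw [Nat.card_congr e, Nat.card_congr Finsupp.equivFunOnFinite, Nat.card_fun, Nat.card_zmod]
  simp

theorem encard_ball [NeZero M] (L : ℕ) : (ball M L : Set (Omega M)).encard = (M ^ L : ℕ) := by
  have : Finite (ball M L) := Nat.finite_of_card_ne_zero (by simp [natCard_ball, NeZero.ne])
  change ENat.card (ball M L) = _
  rw [ENat.card_eq_coe_natCard, natCard_ball]

theorem hnorm_zero : hnorm (0 : Omega M) = 0 := by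
  simp [hnorm]

theorem ball_subset_succ (L : ℕ) : (ball M L : Set (Omega M)) ⊆ ball M (L + 1) := by
  intro x
  simp only [coe_ball, Set.mem_ofPred_eq]
  omega

theorem encard_sphere [NeZero M] (k : ℕ) :
    {y : Omega M | hnorm y = k + 1}.encard = (M ^ k * (M - 1) : ℕ) := by
  have hS : {y : Omega M | hnorm y = k + 1} = (ball M (k + 1) : Set (Omega M)) \ ball M k := by
    ext y
    simp only [coe_ball, Set.mem_sdiff, Set.mem_ofPred_eq]
    omega
  rw [hS, Set.encard_sdiff (ball_subset_succ k) (Set.finite_of_encard_eq_coe (encard_ball k)),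
    encard_ball, encard_ball, ← ENat.natCast_sub, pow_succ, ← Nat.mul_sub_one]

variable {c : ℝ} {r : ℕ → ℝ≥0∞} {ρ : PMF (Omega M)}

theorem toMeasure_sphere (hM : 2 ≤ M)
    (hρ : ∀ y : Omega M, y ≠ 0 →
      ρ y = r (hnorm y) / ((M : ℝ≥0∞) ^ (hnorm y - 1) * ((M : ℝ≥0∞) - 1)))
    (k : ℕ) : ρ.toMeasure {y | hnorm y = k + 1} = r (k + 1) := by
  have : NeZero M := ⟨by omega⟩
  have hval : ∀ y : {y : Omega M | hnorm y = k + 1},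
      ρ y = r (k + 1) / ((M ^ k * (M - 1) : ℕ) : ℝ≥0∞) := fun ⟨y, hy⟩ => by
    have hy0 : y ≠ 0 := by rintro rfl; simp [hnorm_zero] at hy
    simp only [Set.mem_ofPred_eq] at hy
    rw [hρ y hy0, hy, Nat.add_sub_cancel, Nat.cast_mul, ENNReal.natCast_sub, Nat.cast_pow,
      Nat.cast_one]
  rw [PMF.toMeasure_apply _ (.of_discrete), ← tsum_subtype, tsum_congr hval,
    ENNReal.tsum_set_const, encard_sphere, ENat.toENNReal_coe]
  exact ENNReal.mul_div_cancel (Nat.cast_ne_zero.2 (Nat.mul_ne_zero (pow_ne_zero _ (by omega))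
    (by omega))) (ENNReal.natCast_ne_top _)

theorem compl_ball_eq_iUnion (L : ℕ) :
    (ball M L : Set (Omega M))ᶜ = ⋃ j : ℕ, {y | hnorm y = L + j + 1} := by
  ext y
  simp only [coe_ball, Set.mem_compl_iff, Set.mem_ofPred_eq, Set.mem_iUnion, not_le]
  exact ⟨fun h => ⟨hnorm y - L - 1, by omega⟩, fun ⟨j, hj⟩ => by omega⟩

theorem toMeasure_compl_ball (hM : 2 ≤ M) (hc0 : 0 < c) (hcM : c < M)
    (hrdef : ∀ j : ℕ, r j = ENNReal.ofReal ((1 - c / M) * (c / M) ^ (j - 1)))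
    (hρ : ∀ y : Omega M, y ≠ 0 →
      ρ y = r (hnorm y) / ((M : ℝ≥0∞) ^ (hnorm y - 1) * ((M : ℝ≥0∞) - 1)))
    (L : ℕ) : ρ.toMeasure (ball M L : Set (Omega M))ᶜ = ENNReal.ofReal ((c / M) ^ L) := by
  have hx0 : 0 ≤ c / M := by positivity
  have hx1 : c / M < 1 := (div_lt_one (by positivity)).2 hcM
  have hdisj : Pairwise fun i j : ℕ =>
      Disjoint {y : Omega M | hnorm y = L + i + 1} {y | hnorm y = L + j + 1} :=
    fun i j hij => Set.disjoint_left.2 fun y hi hj => hij (by simp_all)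
  rw [compl_ball_eq_iUnion, measure_iUnion hdisj fun _ => .of_discrete]
  simp only [toMeasure_sphere hM hρ, hrdef, Nat.add_sub_cancel]
  rw [← ENNReal.ofReal_tsum_of_nonneg (fun j => mul_nonneg (by linarith) (by positivity))
    (((summable_geometric_of_lt_one hx0 hx1).mul_left ((c / M) ^ L)).mul_left (1 - c / M) |>.congr
      fun j => by ring)]
  simp only [pow_add, tsum_mul_left, tsum_geometric_of_lt_one hx0 hx1]
  congr 1
  rw [mul_left_comm, mul_inv_cancel₀ (sub_pos.2 hx1).ne', mul_one]

theorem numberVariance_walk_ball [NeZero M] (n L : ℕ) :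
    (walk ρ n).numberVariance (ball M L) = ENNReal.ofReal ((M : ℝ) ^ L *
      (((walk ρ n).map Neg.neg).addConv (walk ρ n)).toMeasure.real
        (ball M L : Set (Omega M))ᶜ) := by
  rw [PMF.numberVariance_eq, encard_ball, ENNReal.ofReal_mul (by positivity), measureReal_def,
    ENNReal.ofReal_toReal (measure_ne_top _ _), ENat.toENNReal_coe, ← Nat.cast_pow,
    ENNReal.ofReal_natCast]

theorem numberVariance_walk_ball_bounds (hM : 2 ≤ M) (hc0 : 0 < c) (hcM : c < M)
    (hrdef : ∀ j : ℕ, r j = ENNReal.ofReal ((1 - c / M) * (c / M) ^ (j - 1)))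
    (hρ : ∀ y : Omega M, y ≠ 0 →
      ρ y = r (hnorm y) / ((M : ℝ≥0∞) ^ (hnorm y - 1) * ((M : ℝ≥0∞) - 1)))
    (n L : ℕ) :
    ENNReal.ofReal (c ^ L * (2 * n - (2 * n) ^ 2 * (c / M) ^ L))
        ≤ (walk ρ n).numberVariance (ball M L) ∧
      (walk ρ n).numberVariance (ball M L) ≤ ENNReal.ofReal (c ^ L * (2 * n)) := by
  have hesc : ρ.toMeasure.real (ball M L : Set (Omega M))ᶜ = (c / M) ^ L := by
    rw [measureReal_def, toMeasure_compl_ball hM hc0 hcM hrdef hρ,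
      ENNReal.toReal_ofReal (by positivity)]
  have hlo := le_measureReal_walk_sub_walk_compl (ball M L) ρ n
  have hup := measureReal_walk_sub_walk_compl_le (ball M L) ρ n
  rw [hesc] at hlo hup
  have hMc : (M : ℝ) ^ L * (c / M) ^ L = c ^ L := by
    rw [← mul_pow, mul_div_cancel₀ _ (by positivity)]
  have hM0 : (0 : ℝ) ≤ (M : ℝ) ^ L := by positivity
  have : NeZero M := ⟨by omega⟩
  rw [numberVariance_walk_ball]
  constructor <;> apply ENNReal.ofReal_le_ofReal
  · calc c ^ L * (2 * n - (2 * n) ^ 2 * (c / M) ^ L)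
        = (M : ℝ) ^ L * (2 * n * (c / M) ^ L - (2 * n * (c / M) ^ L) ^ 2) := by
          rw [← hMc]; ring
      _ ≤ _ := mul_le_mul_of_nonneg_left hlo hM0
  · calc _ ≤ (M : ℝ) ^ L * (2 * n * (c / M) ^ L) := mul_le_mul_of_nonneg_left hup hM0
      _ = c ^ L * (2 * n) := by rw [← hMc]; ring

end Omega

section Squeeze

variable {V : ℕ → ℝ≥0∞} {c a : ℝ} {f : ℕ → ℝ}

theorem tendsto_of_ofReal_pow_mul_squeeze {ℓ : ℝ} (hc : Tendsto (c ^ ·) atTop (𝓝 ℓ))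
    (hf : Tendsto f atTop (𝓝 a)) (hlo : ∀ L, ENNReal.ofReal (c ^ L * f L) ≤ V L)
    (hup : ∀ L, V L ≤ ENNReal.ofReal (c ^ L * a)) :
    Tendsto V atTop (𝓝 (ENNReal.ofReal (ℓ * a))) :=
  tendsto_of_tendsto_of_tendsto_of_le_of_le (ENNReal.tendsto_ofReal (hc.mul hf))
    (ENNReal.tendsto_ofReal (hc.mul_const a)) hlo hup

theorem tendsto_top_of_ofReal_pow_mul_le (hc : 1 < c) (hf : Tendsto f atTop (𝓝 a)) (ha : 0 < a)
    (hlo : ∀ L, ENNReal.ofReal (c ^ L * f L) ≤ V L) : Tendsto V atTop (𝓝 ⊤) :=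
  tendsto_nhds_top_mono'
    (ENNReal.tendsto_ofReal_atTop.comp
      ((tendsto_pow_atTop_atTop_of_one_lt hc).atTop_mul_pos ha hf))
    hlo

end Squeeze

theorem c_walk_number_variance_general (M : ℕ) (hM : 2 ≤ M) (c : ℝ) (hc0 : 0 < c) (hcM : c < M)
    (r : ℕ → ℝ≥0∞)
    (hrdef : ∀ j : ℕ, r j = ENNReal.ofReal ((1 - c / M) * (c / M) ^ (j - 1)))
    (ρ : PMF (Omega M))
    (hρ : ∀ y : Omega M, y ≠ 0 →
      ρ y = r (hnorm y) / ((M : ℝ≥0∞) ^ (hnorm y - 1) * ((M : ℝ≥0∞) - 1)))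
    (n : ℕ) (hn : 1 ≤ n)
    (V : ℕ → ℝ≥0∞)
    (hV : ∀ L : ℕ, V L = ∑' u : Omega M,
      (walk ρ n).toMeasure {x : Omega M | hnorm (u + x) ≤ L} *
        (1 - (walk ρ n).toMeasure {x : Omega M | hnorm (u + x) ≤ L})) :
    (c < 1 → Tendsto V atTop (nhds 0)) ∧
    (c = 1 → Tendsto V atTop (nhds (2 * (n : ℝ≥0∞)))) ∧
    (1 < c → Tendsto V atTop (nhds ⊤)) := by
  obtain rfl : V = fun L => (walk ρ n).numberVariance (Omega.ball M L) := funext fun L => by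
    rw [hV L, PMF.numberVariance, Omega.coe_ball]; rfl
  have hlo L := (Omega.numberVariance_walk_ball_bounds hM hc0 hcM hrdef hρ n L).1
  have hup L := (Omega.numberVariance_walk_ball_bounds hM hc0 hcM hrdef hρ n L).2
  have hf : Tendsto (fun L : ℕ => 2 * (n : ℝ) - (2 * n) ^ 2 * (c / M) ^ L) atTop
      (𝓝 (2 * n : ℝ)) := by
    simpa using tendsto_const_nhds.sub ((tendsto_pow_atTop_nhds_zero_of_lt_one (by positivity)
      ((div_lt_one (by positivity)).2 hcM)).const_mul ((2 * n : ℝ) ^ 2))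
  refine ⟨fun hc => ?_, fun hc => ?_, fun hc => ?_⟩
  · simpa using tendsto_of_ofReal_pow_mul_squeeze
      (tendsto_pow_atTop_nhds_zero_of_lt_one hc0.le hc) hf hlo hup
  · subst hc
    simpa [ENNReal.ofReal_mul] using
      tendsto_of_ofReal_pow_mul_squeeze (ℓ := 1) (by simp) hf hlo hup
  · exact tendsto_top_of_ofReal_pow_mul_le hc hf (by positivity) hlo

/-- For the `c`-random walk (`r_j = (1 - c/M)(c/M)^{j-1}`, `0 < c < M`), the number variance
`Var N_n(L)` tends to `0` if `c < 1`, to `2n` if `c = 1`, and to `∞` if `c > 1`. -/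
theorem c_walk_number_variance (M : ℕ) (hM : 2 ≤ M) (c : ℝ) (hc0 : 0 < c) (hcM : c < M)
    (r : ℕ → ℝ≥0∞)
    (hrdef : ∀ j : ℕ, r j = ENNReal.ofReal ((1 - c / M) * (c / M) ^ (j - 1)))
    (ρ : PMF (Omega M)) (hρ0 : ρ 0 = 0)
    (hρ : ∀ y : Omega M, y ≠ 0 →
      ρ y = r (hnorm y) / ((M : ℝ≥0∞) ^ (hnorm y - 1) * ((M : ℝ≥0∞) - 1)))
    (n : ℕ) (hn : 1 ≤ n)
    (V : ℕ → ℝ≥0∞)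
    (hV : ∀ L : ℕ, V L = ∑' u : Omega M,
      (walk ρ n).toMeasure {x : Omega M | hnorm (u + x) ≤ L} *
        (1 - (walk ρ n).toMeasure {x : Omega M | hnorm (u + x) ≤ L})) :
    (c < 1 → Tendsto V atTop (nhds 0)) ∧
    (c = 1 → Tendsto V atTop (nhds (2 * (n : ℝ≥0∞)))) ∧
    (1 < c → Tendsto V atTop (nhds ⊤)) :=
  c_walk_number_variance_general M hM c hc0 hcM r hrdef ρ hρ n hn V hV
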